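/- Let P and P̃ be stochastic matrices on E_k = {0,...,k} with p_{k,k} = p̃_{k,k} = 1, both chains started at state 0. Assume there exist two coprime positive integers n_1 and n_2 such that P̃^{n_1} ⊴ P^{n_1} and P̃^{n_2} ⊴ P^{n_2}, and moreover that (P̃^n)_{0,k} ≤ (P^n)_{0,k} for every n = 1,...,n̂(n_1,n_2)-1, where n̂(n_1,n_2) := inf{ r ∈ ℕ : every integer r' ≥ r can be written as r' = a·n_1 + b·n_2 with a, b ∈ ℕ }. Then T_k ⪯_st T̃_k: for every n ∈ ℕ, (P̃^n)_{0,k} ≤ (P^n)_{0,k}. -/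

import Mathlib

open Finset Matrix

/-- Usual stochastic order between two vectors on `Fin m`. -/
def stDom {m : ℕ} (μ ν : Fin m → ℝ) : Prop :=
  ∀ j : Fin m, ∑ l ∈ Finset.univ.filter (fun l => j ≤ l), μ l ≤
    ∑ l ∈ Finset.univ.filter (fun l => j ≤ l), ν l

/-- A (row-)stochastic matrix. -/
def IsStochastic {m : ℕ} (P : Matrix (Fin m) (Fin m) ℝ) : Prop :=
  (∀ i j, 0 ≤ P i j) ∧ ∀ i, ∑ j, P i j = 1

/-- The relation `A' ⊴ A`. -/
def tri {m : ℕ} (A' A : Matrix (Fin m) (Fin m) ℝ) : Prop :=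
  ∀ i j : Fin m, i ≤ j → stDom (A' i) (A j)

/-- `n̂(n₁,n₂)`: the least `r` such that every integer `r' ≥ r` can be written
as `a n₁ + b n₂` with `a b ∈ ℕ`. -/
noncomputable def nhat (n1 n2 : ℕ) : ℕ :=
  sInf { r : ℕ | ∀ r' : ℕ, r ≤ r' → ∃ a b : ℕ, r' = a * n1 + b * n2 }

/-! Summing by parts, `μ ⪯_st ν` with equal total mass gives `∑ μ h ≤ ∑ ν h` for every
monotone `h`; applied to the running maximum of the tails of the rows of `B'`, this shows that
`A' ⊴ A` and `B' ⊴ B` imply `A' B' ⊴ A B` for stochastic `A'`, `A`. So `{n | P̃ⁿ ⊴ Pⁿ}` is an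
additive submonoid of `ℕ`; it contains `n₁` and `n₂`, hence every `a n₁ + b n₂`, and in particular
every `n ≥ n̂(n₁, n₂)` (the set defining `n̂` is nonempty because `gcd(n₁, n₂) = 1`). Comparing
row `0` of `P̃ⁿ` and `Pⁿ` on the tail `{k}` then gives `(P̃ⁿ)₀ₖ ≤ (Pⁿ)₀ₖ`. -/

variable {m : ℕ}

theorem sum_mul_eq_add_sum_sub_mul_tail (ρ : Fin (m + 1) → ℝ) (g : ℕ → ℝ) :
    ∑ j, ρ j * g j = (∑ j, ρ j) * g 0 +
      ∑ i ∈ range m, (g (i + 1) - g i) * ∑ j ∈ univ.filter (fun j : Fin (m + 1) => i < j), ρ j := by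
  have hg : ∀ j : Fin (m + 1),
      g j = g 0 + ∑ i ∈ range m, if i < (j : ℕ) then g (i + 1) - g i else 0 := by
    intro j
    rw [← sum_filter, show (range m).filter (· < (j : ℕ)) = range j by ext; simp; omega,
      sum_range_sub]
    ring
  simp_rw [hg, mul_add, mul_sum, mul_ite, mul_zero, sum_add_distrib, ← sum_mul, add_right_inj]
  rw [sum_comm]
  refine sum_congr rfl fun i _ => ?_
  rw [sum_filter]
  exact sum_congr rfl fun j _ => by split_ifs <;> ring

theorem stDom.sum_mul_le_sum_mul {μ ν : Fin m → ℝ} (hd : stDom μ ν)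
    (hs : ∑ j, μ j = ∑ j, ν j) {h : Fin m → ℝ} (hh : Monotone h) :
    ∑ j, μ j * h j ≤ ∑ j, ν j * h j := by
  rcases m with _ | m
  · simp
  set g : ℕ → ℝ := fun i => h (Fin.clamp i m)
  have hhg : ∀ j, h j = g j := fun j => congrArg h (Fin.ext (by simp [Fin.clamp]; omega))
  simp only [hhg]
  rw [sum_mul_eq_add_sum_sub_mul_tail, sum_mul_eq_add_sum_sub_mul_tail, hs]
  refine add_le_add_right (sum_le_sum fun i hi => mul_le_mul_of_nonneg_left ?tails ?step) _
  case step => exact sub_nonneg.2 (hh (by simp [Fin.le_def, Fin.clamp]))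
  case tails =>
    have htail : ∀ ρ : Fin (m + 1) → ℝ, ∑ j ∈ univ.filter (fun j : Fin (m + 1) => i < j), ρ j =
        ∑ j ∈ univ.filter (fun j => (⟨i + 1, by simp at hi; omega⟩ : Fin (m + 1)) ≤ j), ρ j :=
      fun ρ => sum_congr (by ext; simp [Fin.le_def]) fun _ _ => rfl
    rw [htail, htail]
    exact hd _

theorem IsStochastic.mul {A B : Matrix (Fin m) (Fin m) ℝ} (hA : IsStochastic A)
    (hB : IsStochastic B) : IsStochastic (A * B) := by
  refine ⟨fun i j => ?_, fun i => ?_⟩ <;> simp_rw [mul_apply]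
  · exact sum_nonneg fun c _ => mul_nonneg (hA.1 i c) (hB.1 c j)
  rw [sum_comm]
  simp [← mul_sum, hB.2, hA.2 i]

theorem IsStochastic.pow {A : Matrix (Fin m) (Fin m) ℝ} (hA : IsStochastic A) (n : ℕ) :
    IsStochastic (A ^ n) := by
  induction n with
  | zero => exact ⟨fun i j => by simp [one_apply]; positivity, fun i => by simp [one_apply]⟩
  | succ n ih => rw [pow_succ]; exact ih.mul hA

theorem sum_mul_apply (s : Finset (Fin m)) (C D : Matrix (Fin m) (Fin m) ℝ) (r : Fin m) :
    ∑ l ∈ s, (C * D) r l = ∑ c, C r c * ∑ l ∈ s, D c l := by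
  simp_rw [mul_apply, mul_sum]
  exact sum_comm

theorem tri_one : tri (1 : Matrix (Fin m) (Fin m) ℝ) 1 := by
  intro i j hij t
  simp only [one_apply, sum_ite_eq, mem_filter, mem_univ, true_and]
  split_ifs <;> grind

theorem tri.mul {A' A B' B : Matrix (Fin m) (Fin m) ℝ} (hA' : IsStochastic A')
    (hA : IsStochastic A) (tA : tri A' A) (tB : tri B' B) : tri (A' * B') (A * B) := by
  intro i j hij t
  rw [sum_mul_apply, sum_mul_apply]
  set F' : Fin m → ℝ := fun c => ∑ l ∈ univ.filter (fun l => t ≤ l), B' c l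
  set F : Fin m → ℝ := fun c => ∑ l ∈ univ.filter (fun l => t ≤ l), B c l
  set h : Fin m → ℝ := fun c => (Iic c).sup' nonempty_Iic F'
  have hh : Monotone h := fun a b hab => sup'_mono F' (Iic_subset_Iic.2 hab) nonempty_Iic
  have hF'h : ∀ c, F' c ≤ h c := fun c => le_sup' F' (mem_Iic.2 le_rfl)
  have hhF : ∀ c, h c ≤ F c := fun c => sup'_le _ _ fun c' hc' => tB c' c (mem_Iic.1 hc') t
  calc ∑ c, A' i c * F' c ≤ ∑ c, A' i c * h c := by gcongr with c; exact hA'.1 i c; exact hF'h c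
    _ ≤ ∑ c, A j c * h c := (tA i j hij).sum_mul_le_sum_mul (by rw [hA'.2 i, hA.2 j]) hh
    _ ≤ ∑ c, A j c * F c := by gcongr with c; exact hA.1 j c; exact hhF c

theorem tri_pow_of_mem_closure {P' P : Matrix (Fin m) (Fin m) ℝ} (hP' : IsStochastic P')
    (hP : IsStochastic P) {S : Set ℕ} (hS : ∀ s ∈ S, tri (P' ^ s) (P ^ s)) {n : ℕ}
    (hn : n ∈ AddSubmonoid.closure S) : tri (P' ^ n) (P ^ n) := by
  induction hn using AddSubmonoid.closure_induction with
  | mem s hs => exact hS s hs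
  | zero => simpa using tri_one
  | add a b _ _ ha hb => rw [pow_add, pow_add]; exact tri.mul (hP'.pow a) (hP.pow a) ha hb

theorem tri.apply_last_le {A' A : Matrix (Fin (m + 1)) (Fin (m + 1)) ℝ} (hA : tri A' A)
    {i j : Fin (m + 1)} (hij : i ≤ j) : A' i (Fin.last m) ≤ A j (Fin.last m) := by
  simpa [Fin.last_le_iff, filter_eq'] using hA i j hij (Fin.last m)

theorem mem_closure_pair_of_nhat_le {n1 n2 n : ℕ} (hcop : Nat.Coprime n1 n2)
    (hn : nhat n1 n2 ≤ n) : n ∈ AddSubmonoid.closure {n1, n2} := by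
  have hgcd : ∀ r, Nat.setGcd {n1, n2} ∣ r := fun r =>
    (Nat.dvd_gcd (Nat.setGcd_dvd_of_mem (by simp)) (Nat.setGcd_dvd_of_mem (by simp))).trans
      (hcop.gcd_eq_one ▸ one_dvd r)
  have hpair : ∀ r, r ∈ AddSubmonoid.closure {n1, n2} ↔ ∃ a b : ℕ, r = a * n1 + b * n2 := by
    simp [AddSubmonoid.mem_closure_pair, eq_comm]
  obtain ⟨N, hN⟩ := Nat.exists_mem_closure_of_ge {n1, n2}
  have hne : {r : ℕ | ∀ r' : ℕ, r ≤ r' → ∃ a b : ℕ, r' = a * n1 + b * n2}.Nonempty :=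
    ⟨N, fun r hr => (hpair r).1 (hN r hr (hgcd r))⟩
  exact (hpair n).2 (Nat.sInf_mem hne n hn)

theorem st_order_of_coprime_tri_general
    (k : ℕ) (P Pt : Matrix (Fin (k + 1)) (Fin (k + 1)) ℝ)
    (hP : IsStochastic P) (hPt : IsStochastic Pt)
    (n1 n2 : ℕ) (hcop : Nat.Coprime n1 n2)
    (h1 : tri (Pt ^ n1) (P ^ n1)) (h2 : tri (Pt ^ n2) (P ^ n2))
    (hsmall : ∀ n : ℕ, 1 ≤ n → n ≤ nhat n1 n2 - 1 →
      (Pt ^ n) 0 (Fin.last k) ≤ (P ^ n) 0 (Fin.last k)) :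
    ∀ n : ℕ, (Pt ^ n) 0 (Fin.last k) ≤ (P ^ n) 0 (Fin.last k) := by
  intro n
  rcases Nat.eq_zero_or_pos n with rfl | hn0
  · simp
  by_cases hn : n < nhat n1 n2
  · exact hsmall n hn0 (by omega)
  have hgen : ∀ s ∈ ({n1, n2} : Set ℕ), tri (Pt ^ s) (P ^ s) := by
    rintro s (rfl | rfl)
    exacts [h1, h2]
  exact (tri_pow_of_mem_closure hPt hP hgen
    (mem_closure_pair_of_nhat_le hcop (not_lt.1 hn))).apply_last_le le_rfl

/-- Proposition 1.b (De Santis–Spizzichino): if moreover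
`(P̃^n)_{0,k} ≤ (P^n)_{0,k}` for `n = 1, …, n̂(n₁,n₂)-1`, then
`T_k ⪯_st T̃_k`, i.e. `(P̃^n)_{0,k} ≤ (P^n)_{0,k}` for all `n`. -/
theorem st_order_of_coprime_tri
    (k : ℕ) (P Pt : Matrix (Fin (k + 1)) (Fin (k + 1)) ℝ)
    (hP : IsStochastic P) (hPt : IsStochastic Pt)
    (habs : P (Fin.last k) (Fin.last k) = 1) (habst : Pt (Fin.last k) (Fin.last k) = 1)
    (n1 n2 : ℕ) (hn1 : 0 < n1) (hn2 : 0 < n2) (hcop : Nat.Coprime n1 n2)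
    (h1 : tri (Pt ^ n1) (P ^ n1)) (h2 : tri (Pt ^ n2) (P ^ n2))
    (hsmall : ∀ n : ℕ, 1 ≤ n → n ≤ nhat n1 n2 - 1 →
      (Pt ^ n) 0 (Fin.last k) ≤ (P ^ n) 0 (Fin.last k)) :
    ∀ n : ℕ, (Pt ^ n) 0 (Fin.last k) ≤ (P ^ n) 0 (Fin.last k) :=
  st_order_of_coprime_tri_general k P Pt hP hPt n1 n2 hcop h1 h2 hsmall
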